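/- arXiv:1304.7616 — 2 statements merged into one kernel-verified Lean document; each statement's English description precedes it below -/
import Mathlib

section
/- Let B be a unital C*-algebra and A ⊆ B a unital *-subalgebra such that for every n ≥ 1: (i) every matrix x ∈ M_n(A) that is invertible in M_n(B) has its inverse in M_n(A), and (ii) every matrix x ∈ M_n(A) that is a positive invertible element of the C*-algebra M_n(B) has its positive square root in M_n(A). Then every finitely generated projective right A-module E is isomorphic, as a right A-module, to pA^q for some q ≥ 1 and some self-adjoint idempotent p ∈ M_q(A) (p² = p = p*). -/
/-!
A split surjection `A^q → E` presents `E` as the range of an idempotent matrix `e` over `A`.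
Kaplansky's trick replaces `e` by a projection with the same range: `z = 1 + (e* - e)* (e* - e)`
satisfies `e z = z e = e e* e` and `e* z = z e* = e* e e*`, so if `z` is invertible then
`p = e e* z⁻¹` is self-adjoint and idempotent with `p e = e` and `e p = p`. In the C*-algebra
`M_q(B)` we have `1 ≤ z`, so `z` is invertible there, hence in `M_q(A)` by spectral invariance.
-/

/-- The right `A`-module `p A^q` (the image of the action of the matrix `p` on column
vectors), as a submodule of `A^q` viewed as a right `A`-module (i.e. an `Aᵐᵒᵖ`-module). -/
def Matrix.rangeSubmodule {A : Type*} [Ring A] {q : ℕ} (p : Matrix (Fin q) (Fin q) A) :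
    Submodule Aᵐᵒᵖ (Fin q → A) where
  carrier := Set.range p.mulVec
  add_mem' := by rintro _ _ ⟨x, rfl⟩ ⟨y, rfl⟩; exact ⟨x + y, Matrix.mulVec_add p x y⟩
  zero_mem' := ⟨0, by simp⟩
  smul_mem' := by rintro c _ ⟨x, rfl⟩; exact ⟨c • x, Matrix.mulVec_smul p c x⟩

open scoped Matrix

theorem LinearMap.exists_mulVec_eq {R m n : Type*} [Ring R] [Fintype n] [DecidableEq n]
    (f : (n → R) →ₗ[Rᵐᵒᵖ] (m → R)) : ∃ M : Matrix m n R, ∀ v, M *ᵥ v = f v := by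
  refine ⟨Matrix.of fun i j => f (Pi.single j 1) i, fun v => ?_⟩
  have hv : v = ∑ j, MulOpposite.op (v j) • (Pi.single j 1 : n → R) := by
    ext i
    simp [Finset.sum_apply, Pi.single_apply, MulOpposite.smul_eq_mul_unop]
  conv_rhs => rw [hv]
  ext i
  simp [Matrix.mulVec, dotProduct, Finset.sum_apply, MulOpposite.smul_eq_mul_unop]

theorem Matrix.rangeSubmodule_mul_le {R : Type*} [Ring R] {q : ℕ}
    (M N : Matrix (Fin q) (Fin q) R) : (M * N).rangeSubmodule ≤ M.rangeSubmodule := by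
  rintro _ ⟨v, rfl⟩
  exact ⟨N *ᵥ v, Matrix.mulVec_mulVec v M N⟩

theorem Module.Finite.exists_fin_succ_surjective {R E : Type*} [Semiring R] [AddCommMonoid E]
    [Module Rᵐᵒᵖ E] [Module.Finite Rᵐᵒᵖ E] :
    ∃ (n : ℕ) (π : (Fin (n + 1) → R) →ₗ[Rᵐᵒᵖ] E), Function.Surjective π := by
  obtain ⟨n, f, hf⟩ := Module.Finite.exists_fin' Rᵐᵒᵖ E
  let op : (Fin n → R) ≃ₗ[Rᵐᵒᵖ] (Fin n → Rᵐᵒᵖ) :=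
    .piCongrRight fun _ => MulOpposite.opLinearEquiv Rᵐᵒᵖ
  exact ⟨n, f ∘ₗ op.toLinearMap ∘ₗ LinearMap.funLeft Rᵐᵒᵖ R Fin.castSucc,
    hf.comp <| op.surjective.comp <|
      LinearMap.funLeft_surjective_of_injective _ _ _ (Fin.castSucc_injective n)⟩

theorem Module.Projective.exists_isIdempotentElem_rangeSubmodule_equiv {R E : Type*} [Ring R]
    [AddCommGroup E] [Module Rᵐᵒᵖ E] [Module.Projective Rᵐᵒᵖ E] {q : ℕ}
    (π : (Fin q → R) →ₗ[Rᵐᵒᵖ] E) (hπ : Function.Surjective π) :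
    ∃ e : Matrix (Fin q) (Fin q) R, IsIdempotentElem e ∧
      Nonempty (E ≃ₗ[Rᵐᵒᵖ] e.rangeSubmodule) := by
  obtain ⟨σ, hσ⟩ := Module.projective_lifting_property π LinearMap.id hπ
  have hπσ : ∀ y, π (σ y) = y := LinearMap.ext_iff.mp hσ
  obtain ⟨e, he⟩ := (σ ∘ₗ π).exists_mulVec_eq
  refine ⟨e, ?_, ⟨(LinearEquiv.ofInjective σ (Function.LeftInverse.injective hπσ)).trans
    (LinearEquiv.ofEq _ _ (SetLike.ext' ?_))⟩⟩
  · refine Matrix.ext_iff_mulVec.mpr fun v => ?_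
    simp [← Matrix.mulVec_mulVec, he, hπσ]
  · change Set.range σ = Set.range e.mulVec
    rw [funext he]
    exact (hπ.range_comp σ).symm

theorem exists_isStarProjection_of_isIdempotentElem {R : Type*} [Ring R] [StarRing R] {e : R}
    (he : IsIdempotentElem e) (hz : IsUnit (1 + star (star e - e) * (star e - e))) :
    ∃ p : R, IsStarProjection p ∧ p * e = e ∧ e * p = p := by
  obtain ⟨u, hu⟩ := hz
  set f := star e with hf_def
  have hf : IsIdempotentElem f := he.star
  have hu' : (u : R) = 1 + e * f - e - f + f * e := by
    rw [hu, star_sub, star_star, ← hf_def]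
    simp only [mul_sub, sub_mul, he.eq, hf.eq]
    abel
  have hue : (u : R) * e = e * f * e := by
    simp only [hu', add_mul, sub_mul, one_mul, mul_assoc, he.eq]; abel
  have heu : e * (u : R) = e * f * e := by
    simp only [hu', mul_add, mul_sub, mul_one, ← mul_assoc, he.eq]; abel
  have huf : (u : R) * f = f * e * f := by
    simp only [hu', add_mul, sub_mul, one_mul, mul_assoc, hf.eq]; abel
  have hfu : f * (u : R) = f * e * f := by
    simp only [hu', mul_add, mul_sub, mul_one, ← mul_assoc, hf.eq]; abel
  have hce : Commute e ↑u⁻¹ := Commute.units_inv_right (heu.trans hue.symm)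
  have hcf : Commute f ↑u⁻¹ := Commute.units_inv_right (hfu.trans huf.symm)
  have hus : star (u : R) = u := by
    rw [hu', hf_def]; simp only [star_add, star_sub, star_mul, star_star, star_one]; abel
  have hus' : star (↑u⁻¹ : R) = ↑u⁻¹ := by
    rw [← Units.coe_star_inv]; congr 2; exact Units.ext hus
  have hpe : e * f * ↑u⁻¹ * e = e :=
    calc e * f * ↑u⁻¹ * e = e * f * e * ↑u⁻¹ := by rw [mul_assoc, ← hce.eq, ← mul_assoc]
      _ = e * u * ↑u⁻¹ := by rw [heu]
      _ = e := Units.mul_inv_cancel_right e u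
  refine ⟨e * f * ↑u⁻¹, ⟨?_, ?_⟩, hpe, by rw [← mul_assoc, ← mul_assoc, he.eq]⟩
  · rw [IsIdempotentElem, ← mul_assoc, ← mul_assoc, hpe]
  · rw [IsSelfAdjoint, star_mul, star_mul, hus', hf_def, star_star, ← hf_def, ← mul_assoc,
      ← hce.eq, mul_assoc, ← hcf.eq, mul_assoc]

theorem Matrix.isUnit_one_add_conjTranspose_mul_self {n B : Type*} [Fintype n] [DecidableEq n]
    [CStarAlgebra B] (k : Matrix n n B) : IsUnit (1 + kᴴ * k) := by
  let _ := CStarAlgebra.spectralOrder B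
  have _ := CStarAlgebra.spectralOrderedRing B
  let k' := CStarMatrix.ofMatrixStarAlgEquiv (A := B) (n := n) k
  have : IsUnit (1 + star k' * k') :=
    CStarAlgebra.isUnit_of_le 1 (le_add_of_nonneg_right (star_mul_self_nonneg k'))
  simpa [k', map_star, Matrix.star_eq_conjTranspose] using
    this.map CStarMatrix.ofMatrixStarAlgEquiv.symm

theorem stmt_1_general {B : Type*} [CStarAlgebra B] (A : StarSubalgebra ℂ B)
    -- (i): spectral invariance for matrices over `A`
    (hinv : ∀ n : ℕ, 1 ≤ n → ∀ x : Matrix (Fin n) (Fin n) A,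
      IsUnit (x.map (fun a => (a : B))) → IsUnit x)
    (E : Type*) [AddCommGroup E] [Module Aᵐᵒᵖ E]
    [Module.Finite Aᵐᵒᵖ E] [Module.Projective Aᵐᵒᵖ E] :
    ∃ (q : ℕ) (_ : 1 ≤ q) (p : Matrix (Fin q) (Fin q) A),
      p * p = p ∧ p.conjTranspose = p ∧
      Nonempty (E ≃ₗ[Aᵐᵒᵖ] p.rangeSubmodule) := by
  obtain ⟨n, π, hπ⟩ := Module.Finite.exists_fin_succ_surjective (R := A) (E := E)
  obtain ⟨e, he, ⟨φ⟩⟩ := Module.Projective.exists_isIdempotentElem_rangeSubmodule_equiv π hπ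
  set k := star e - e
  have hz : IsUnit (1 + star k * k) := by
    refine hinv (n + 1) n.succ_pos _ ?_
    have hmap : (1 + star k * k).map (fun a : A => (a : B)) = 1 + (k.map (↑))ᴴ * k.map (↑) := by
      change (A.subtype : A →+* B).mapMatrix (1 + kᴴ * k) = _
      rw [map_add, map_one, map_mul]
      exact congr_arg₂ _ rfl (congr_arg₂ _ (Matrix.conjTranspose_map _ fun _ => rfl) rfl)
    rw [hmap]
    exact Matrix.isUnit_one_add_conjTranspose_mul_self _
  obtain ⟨p, hp, hpe, hep⟩ := exists_isStarProjection_of_isIdempotentElem he hz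
  have hrange : p.rangeSubmodule = e.rangeSubmodule :=
    le_antisymm (hep ▸ e.rangeSubmodule_mul_le p) (hpe ▸ p.rangeSubmodule_mul_le e)
  exact ⟨n + 1, n.succ_pos, p, hp.isIdempotentElem.eq, hp.isSelfAdjoint.star_eq,
    ⟨φ.trans (LinearEquiv.ofEq _ _ hrange.symm)⟩⟩

/-- Let `B` be a unital C*-algebra and `A ⊆ B` a unital *-subalgebra such
that for every `n ≥ 1`: (i) every matrix over `A` invertible in `M_n(B)` has its inverse in
`M_n(A)`, and (ii) every matrix over `A` that is positive and invertible in the C*-algebra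
`M_n(B)` has its positive square root in `M_n(A)`.  Then every finitely generated projective
right `A`-module is isomorphic to `p A^q` for some `q ≥ 1` and a self-adjoint idempotent
`p ∈ M_q(A)`. -/
theorem stmt_1 {B : Type*} [CStarAlgebra B] (A : StarSubalgebra ℂ B)
    -- (i): spectral invariance for matrices over `A`
    (hinv : ∀ n : ℕ, 1 ≤ n → ∀ x : Matrix (Fin n) (Fin n) A,
      IsUnit (x.map (fun a => (a : B))) → IsUnit x)
    -- (ii): a positive invertible matrix over `A` has its positive square root over `A`
    (hsqrt : ∀ n : ℕ, 1 ≤ n → ∀ x : Matrix (Fin n) (Fin n) A,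
      (∃ z : Matrix (Fin n) (Fin n) B, x.map (fun a => (a : B)) = z.conjTranspose * z) →
      IsUnit (x.map (fun a => (a : B))) →
      ∃ y : Matrix (Fin n) (Fin n) A, y * y = x ∧
        ∃ w : Matrix (Fin n) (Fin n) B, y.map (fun a => (a : B)) = w.conjTranspose * w)
    (E : Type*) [AddCommGroup E] [Module Aᵐᵒᵖ E]
    [Module.Finite Aᵐᵒᵖ E] [Module.Projective Aᵐᵒᵖ E] :
    ∃ (q : ℕ) (_ : 1 ≤ q) (p : Matrix (Fin q) (Fin q) A),
      p * p = p ∧ p.conjTranspose = p ∧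
      Nonempty (E ≃ₗ[Aᵐᵒᵖ] p.rangeSubmodule) :=
  stmt_1_general A hinv E
end

section
/- Let A be a unital complex *-algebra and E a finitely generated projective right A-module equipped with a Hermitian structure ⟨·,·⟩. For ξ,η ∈ E let θ_{ξ,η} : E → E denote the right A-module endomorphism θ_{ξ,η}(ζ) = ξ·⟨η,ζ⟩. Then every right A-module endomorphism T : E → E is a finite sum of operators of the form θ_{ξ,η} with ξ,η ∈ E. -/
open MulOpposite

/-- A *Hermitian structure* on a right `A`-module `E` (for `A` a unital complex *-algebra):
a pairing `E × E → A`, conjugate-linear in the first variable and `ℂ`-linear in the second,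
such that (a) `⟨ξ,η⟩* = ⟨η,ξ⟩`, (b) `⟨ξ, η·a⟩ = ⟨ξ,η⟩·a`, and (c) `ξ ↦ ⟨ξ,·⟩` is a bijection
from `E` onto the right `A`-module maps `E → A`. -/
structure IsHermitianStructure (A : Type*) {E : Type*} [Ring A] [Algebra ℂ A] [StarRing A]
    [AddCommGroup E] [Module ℂ E] [Module Aᵐᵒᵖ E] (pair : E → E → A) : Prop where
  add_left : ∀ ξ ζ η, pair (ξ + ζ) η = pair ξ η + pair ζ η
  add_right : ∀ ξ η ζ, pair ξ (η + ζ) = pair ξ η + pair ξ ζ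
  smul_left : ∀ (c : ℂ) (ξ η : E), pair (c • ξ) η = (starRingEnd ℂ) c • pair ξ η
  smul_right : ∀ (c : ℂ) (ξ η : E), pair ξ (c • η) = c • pair ξ η
  star_pair : ∀ ξ η, star (pair ξ η) = pair η ξ
  mul_right : ∀ (ξ η : E) (a : A), pair ξ (op a • η) = pair ξ η * a
  self_dual : ∀ f : E →ₗ[Aᵐᵒᵖ] A, ∃! ξ : E, ∀ η, f η = pair ξ η

/-- Over a unital complex *-algebra `A`, every right-module endomorphism of
a finitely generated projective right `A`-module `E` with a Hermitian structure is a finite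
sum of the rank-one operators `θ_{ξ,η} : ζ ↦ ξ·⟨η,ζ⟩`. -/
theorem stmt_3 {A E : Type*} [Ring A] [Algebra ℂ A] [StarRing A]
    [AddCommGroup E] [Module ℂ E] [Module Aᵐᵒᵖ E]
    [Module.Finite Aᵐᵒᵖ E] [Module.Projective Aᵐᵒᵖ E]
    (pair : E → E → A) (hpair : IsHermitianStructure A pair)
    (T : E →ₗ[Aᵐᵒᵖ] E) :
    ∃ (n : ℕ) (ξ η : Fin n → E),
      ∀ ζ : E, T ζ = ∑ j, op (pair (η j) ζ) • ξ j := by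
  obtain ⟨n, π, hπ⟩ := Module.Finite.exists_fin' Aᵐᵒᵖ E
  obtain ⟨s, hs⟩ := Module.projective_lifting_property π LinearMap.id hπ
  -- coordinate functionals valued in A
  set x : Fin n → E := fun i => π (Pi.single i 1) with hx
  have key : ∀ ζ : E, ζ = ∑ i, s ζ i • x i := by
    intro ζ
    have h1 : π (s ζ) = ζ := by
      have := congrFun (congrArg DFunLike.coe hs) ζ
      simpa using this
    conv_lhs => rw [← h1, LinearMap.pi_apply_eq_sum_univ π (s ζ)]
    refine Finset.sum_congr rfl fun i _ => ?_
    simp only [hx]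
    congr 1
    exact congrArg (fun v => π v) (funext fun j => by simp [Pi.single_apply, eq_comm])
  -- the A-valued coordinate functionals
  have hlin : ∀ i, ∃ η : E, ∀ ζ, unop (s ζ i) = pair η ζ := by
    intro i
    let g : E →ₗ[Aᵐᵒᵖ] A :=
      { toFun := fun ζ => unop (s ζ i)
        map_add' := by intro a b; simp
        map_smul' := by
          intro a ζ
          simp [MulOpposite.smul_eq_mul_unop] }
    obtain ⟨η, hη, -⟩ := hpair.self_dual g
    exact ⟨η, fun ζ => hη ζ⟩
  choose η hη using hlin
  refine ⟨n, fun i => T (x i), η, fun ζ => ?_⟩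
  conv_lhs => rw [key ζ]
  rw [map_sum]
  refine Finset.sum_congr rfl fun i _ => ?_
  rw [map_smul]
  congr 1
  rw [← hη i ζ]
  simp
end
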